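/- Let F be a field with a valuation v : F → Γ₀ into a linearly ordered commutative group with zero, and let π ∈ F satisfy v(π) > 1. Let g ∈ SL₂(F) have entries g = [[x, y], [z, w]] (so xw − yz = 1). Then g lies in the double coset I · W' · I, where W' = [[0, π⁻¹], [−π, 0]] (the determinant-1 antidiagonal representative) and I is the Iwahori subgroup, if and only if v(x) ≤ v(π), v(y) ≤ v(π), v(z) = v(π), and v(w) ≤ v(π). -/

import Mathlib

/-- Membership in the Iwahori subgroup of `SL₂` of a valued field: a matrix of determinant `1`,
entries of valuation at most `1`, and lower-left entry of valuation strictly less than `1`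
(i.e. a matrix over the valuation ring whose residue is upper triangular). -/
def IwahoriMem {F Γ₀ : Type*} [Field F] [LinearOrderedCommGroupWithZero Γ₀]
    (v : Valuation F Γ₀) (m : Matrix (Fin 2) (Fin 2) F) : Prop :=
  m.det = 1 ∧ v (m 0 0) ≤ 1 ∧ v (m 0 1) ≤ 1 ∧ v (m 1 0) < 1 ∧ v (m 1 1) ≤ 1

/-!
The `(k, l)` entry of `i₁ W' i₂` is `i₁ k 0 · π⁻¹ · i₂ 1 l − i₁ k 1 · π · i₂ 0 l`. The entries of
`i₁, i₂` are integral, so every entry has valuation at most `max (v π⁻¹) (v π) = v π`. In the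
lower-left entry the summand `i₁ 1 1 · π · i₂ 0 0` has valuation exactly `v π`, because the
diagonal entries of an Iwahori matrix are units (`a d = 1 + b c` with `v (b c) < 1`), and the
other summand is smaller. Conversely, `z ≠ 0` and `g` factors as
`[[1, x/z], [0, 1]] · W' · [[-z/π, -w/π], [0, -π/z]]`, whose outer factors are Iwahori exactly
under the stated bounds.
-/

namespace Valuation

variable {R Γ₀ : Type*} [CommRing R] [LinearOrderedCommGroupWithZero Γ₀] (v : Valuation R Γ₀)

theorem map_mul_mul_le {a b c : R} (ha : v a ≤ 1) (hb : v b ≤ 1) : v (a * c * b) ≤ v c := by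
  simpa using mul_le_mul' (mul_le_mul' ha le_rfl) hb

theorem map_mul_mul_eq {a b c : R} (ha : v a = 1) (hb : v b = 1) : v (a * c * b) = v c := by
  simp [ha, hb]

end Valuation

theorem Matrix.mul_antidiag_mul_apply {R : Type*} [CommRing R]
    (A B : Matrix (Fin 2) (Fin 2) R) (p q : R) (i j : Fin 2) :
    (A * !![0, q; p, 0] * B) i j = A i 0 * q * B 1 j + A i 1 * p * B 0 j := by
  simp only [Matrix.mul_apply, Matrix.of_apply, Matrix.cons_val', Matrix.cons_val_fin_one,
    Fin.sum_univ_two, Matrix.cons_val_zero, Matrix.cons_val_one, mul_zero, zero_add, add_zero]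
  ring

namespace IwahoriMem

variable {F Γ₀ : Type*} [Field F] [LinearOrderedCommGroupWithZero Γ₀] {v : Valuation F Γ₀}
  {m : Matrix (Fin 2) (Fin 2) F}

theorem valuation_le_one (h : IwahoriMem v m) (i j : Fin 2) : v (m i j) ≤ 1 := by
  obtain ⟨-, h00, h01, h10, h11⟩ := h
  fin_cases i <;> fin_cases j
  exacts [h00, h01, h10.le, h11]

theorem valuation_diag_mul_eq_one (h : IwahoriMem v m) : v (m 0 0) * v (m 1 1) = 1 := by
  obtain ⟨hdet, -, h01, h10, -⟩ := h
  have hoff : v (m 0 1 * m 1 0) < v 1 := by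
    simpa using Right.mul_lt_one_of_le_of_lt h01 h10
  rw [Matrix.det_fin_two, sub_eq_iff_eq_add] at hdet
  rw [← v.map_mul, hdet, v.map_add_eq_of_lt_left hoff, v.map_one]

theorem valuation_zero_zero (h : IwahoriMem v m) : v (m 0 0) = 1 :=
  eq_one_of_one_le_mul_left (h.valuation_le_one 0 0) (h.valuation_le_one 1 1)
    h.valuation_diag_mul_eq_one.ge

theorem valuation_one_one (h : IwahoriMem v m) : v (m 1 1) = 1 :=
  eq_one_of_one_le_mul_right (h.valuation_le_one 0 0) (h.valuation_le_one 1 1)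
    h.valuation_diag_mul_eq_one.ge

theorem of_upperTriangular {a b d : F} (had : a * d = 1) (ha : v a ≤ 1) (hb : v b ≤ 1)
    (hd : v d ≤ 1) : IwahoriMem v !![a, b; 0, d] :=
  ⟨by simpa [Matrix.det_fin_two] using had, ha, hb, by simp, hd⟩

variable {π : F} {A B : Matrix (Fin 2) (Fin 2) F}

theorem valuation_mul_antidiag_mul_le (hπ : 1 < v π) (hA : IwahoriMem v A)
    (hB : IwahoriMem v B) (i j : Fin 2) :
    v ((A * !![0, π⁻¹; -π, 0] * B) i j) ≤ v π := by
  rw [Matrix.mul_antidiag_mul_apply]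
  refine v.map_add_le ?_ ?_
  · calc v (A i 0 * π⁻¹ * B 1 j) ≤ v π⁻¹ := v.map_mul_mul_le (hA.valuation_le_one _ _)
          (hB.valuation_le_one _ _)
      _ ≤ v π := by rw [map_inv₀]; exact (inv_lt_one_of_one_lt₀ hπ).le.trans hπ.le
  · simpa using v.map_mul_mul_le (c := π) (hA.valuation_le_one i 1) (hB.valuation_le_one 0 j)

theorem valuation_mul_antidiag_mul_one_zero (hπ : 1 < v π) (hA : IwahoriMem v A)
    (hB : IwahoriMem v B) : v ((A * !![0, π⁻¹; -π, 0] * B) 1 0) = v π := by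
  have hmain : v (A 1 1 * -π * B 0 0) = v π := by
    simpa using v.map_mul_mul_eq (c := π) hA.valuation_one_one hB.valuation_zero_zero
  have hsmall : v (A 1 0 * π⁻¹ * B 1 0) < v π :=
    calc v (A 1 0 * π⁻¹ * B 1 0) ≤ v π⁻¹ := v.map_mul_mul_le (hA.valuation_le_one _ _)
          (hB.valuation_le_one _ _)
      _ < v π := by rw [map_inv₀]; exact (inv_lt_one_of_one_lt₀ hπ).trans hπ
  rw [Matrix.mul_antidiag_mul_apply, v.map_add_eq_of_lt_right (hmain ▸ hsmall), hmain]

end IwahoriMem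

theorem Matrix.eq_upper_mul_antidiag_mul_upper {F : Type*} [Field F] {x y z w π : F}
    (hz : z ≠ 0) (hπ : π ≠ 0) (hdet : x * w - y * z = 1) :
    !![x, y; z, w] =
      !![1, x / z; 0, 1] * !![0, π⁻¹; -π, 0] * !![-(z / π), -(w / π); 0, -(π / z)] := by
  ext i j
  rw [Matrix.mul_antidiag_mul_apply]
  fin_cases i <;> fin_cases j <;>
    simp only [Fin.zero_eta, Fin.mk_one, Matrix.of_apply, Matrix.cons_val', Matrix.cons_val_zero,
      Matrix.cons_val_one, Matrix.cons_val_fin_one, zero_mul, mul_zero, one_mul, mul_neg, neg_mul,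
      neg_neg, neg_zero, zero_add] <;>
    field_simp
  linear_combination -hdet

/-- Let `g = [[x, y], [z, w]] ∈ SL₂(F)` and `v(π) > 1`.  Then
`g ∈ I · [[0, π⁻¹], [−π, 0]] · I` iff `v(x) ≤ v(π)`, `v(y) ≤ v(π)`, `v(z) = v(π)` and
`v(w) ≤ v(π)`. -/
theorem mem_iwahori_double_coset_antidiag_inv_iff
    {F Γ₀ : Type*} [Field F] [LinearOrderedCommGroupWithZero Γ₀]
    (v : Valuation F Γ₀) (π : F) (hπ : 1 < v π)
    (x y z w : F) (hdet : x * w - y * z = 1) :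
    (∃ i₁ i₂ : Matrix (Fin 2) (Fin 2) F, IwahoriMem v i₁ ∧ IwahoriMem v i₂ ∧
        !![x, y; z, w] = i₁ * !![0, π⁻¹; -π, 0] * i₂) ↔
      v x ≤ v π ∧ v y ≤ v π ∧ v z = v π ∧ v w ≤ v π := by
  constructor
  · rintro ⟨A, B, hA, hB, hg⟩
    have hle : ∀ i j, v (!![x, y; z, w] i j) ≤ v π := fun i j ↦
      hg ▸ hA.valuation_mul_antidiag_mul_le hπ hB i j
    have hz : v (!![x, y; z, w] 1 0) = v π := hg ▸ hA.valuation_mul_antidiag_mul_one_zero hπ hB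
    exact ⟨hle 0 0, hle 0 1, hz, hle 1 1⟩
  · rintro ⟨hx, -, hz, hw⟩
    have hπ0 : π ≠ 0 := v.ne_zero_iff.1 (zero_lt_one.trans hπ).ne'
    have hz0 : z ≠ 0 := v.ne_zero_iff.1 (hz ▸ (zero_lt_one.trans hπ).ne')
    have hdiv : ∀ {a b : F}, v a ≤ v b → v (a / b) ≤ 1 := fun h ↦ by
      simpa using div_le_one_of_le₀ h zero_le
    refine ⟨_, _, IwahoriMem.of_upperTriangular (one_mul 1) v.map_one.le (hdiv (hz ▸ hx))
      v.map_one.le, IwahoriMem.of_upperTriangular ?_ ?_ ?_ ?_,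
      Matrix.eq_upper_mul_antidiag_mul_upper hz0 hπ0 hdet⟩
    · field_simp
    · simpa using hdiv hz.le
    · simpa using hdiv hw
    · simpa using hdiv hz.ge
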